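/- Let R = k[[x,y]]/(y^2 - x^3) (an ordinary cusp) over a field k. Then every finitely generated torsion-free rank-1 R-module is isomorphic either to R or to the maximal ideal (x,y). -/

import Mathlib

/-!
STATEMENT 2: Let `R = k[[x,y]]/(y² - x³)` (an ordinary cusp) over a field `k`.  Then
every finitely generated torsion-free rank-1 `R`-module is isomorphic either to `R` or
to the maximal ideal `(x, y)`.

Torsion-free: no nonzero element of `M` is killed by a non-zerodivisor of `R`.  Rank 1:
the base change of `M` to the fraction field `K = Frac R` is one-dimensional; this is
expressed via `IsLocalizedModule` for an arbitrary realization `(K, MK)` of the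
fraction field and of `M ⊗_R K`.
-/

set_option synthInstance.maxHeartbeats 1000000
set_option maxHeartbeats 1000000

noncomputable section

/-- The ordinary cusp `k[[x,y]]/(y² - x³)`. -/
abbrev CuspRing (k : Type) [Field k] : Type :=
  MvPowerSeries (Fin 2) k ⧸
    (Ideal.span {(MvPowerSeries.X 1 ^ 2 - MvPowerSeries.X 0 ^ 3 : MvPowerSeries (Fin 2) k)})

/-- The image of `x` in `k[[x,y]]/(y² - x³)`. -/
abbrev cuspX (k : Type) [Field k] : CuspRing k :=
  Ideal.Quotient.mk _ (MvPowerSeries.X 0)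

/-- The image of `y` in `k[[x,y]]/(y² - x³)`. -/
abbrev cuspY (k : Type) [Field k] : CuspRing k :=
  Ideal.Quotient.mk _ (MvPowerSeries.X 1)

/-!
The substitution `x ↦ t², y ↦ t³` identifies `R` with the subring `S = {g | g₁ = 0}` of the
discrete valuation ring `k⟦t⟧`: its kernel is `(y² - x³)`, since modulo `y² - x³` every series
is congruent to one of the form `A(x) + y B(x)`, which is determined by its image
`A(t²) + t³ B(t²)`. A finitely generated torsion-free module of rank one embeds in `Frac R`,
and clearing denominators makes it a nonzero ideal `I`. Take `a ∈ I` whose image has least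
`t`-adic order, so that the image of `I` lies in `a · k⟦t⟧`. Either `I = (a)`, or `I` contains
an element `w` with image `t · a`; as `k⟦t⟧ = S + k t`, then `I = (a, w)`, and `a y = x w`
shows that multiplication by `x` and by `a` identify `(a, w)` with `(x, y)`.
-/

open PowerSeries
open scoped nonZeroDivisors

section General

variable {R M : Type*} [CommRing R] [AddCommGroup M] [Module R M]

lemma Ideal.exists_mem_ne_zero_forall_map_dvd {T : Type*} [CommRing T] [IsDomain T]
    [IsDiscreteValuationRing T] (φ : R →+* T) {I : Ideal R} (hI : I ≠ ⊥) :
    ∃ a ∈ I, a ≠ 0 ∧ ∀ x ∈ I, φ a ∣ φ x := by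
  let s : Set R := {x | x ∈ I ∧ x ≠ 0}
  have hs : s.Nonempty := Submodule.exists_mem_ne_zero_of_ne_bot hI
  let v : R → ℕ∞ := fun x => IsDiscreteValuationRing.addVal T (φ x)
  obtain ⟨haI, ha0⟩ : Function.argminOn v s hs ∈ s := Function.argminOn_mem v s hs
  refine ⟨_, haI, ha0, fun x hx => ?_⟩
  rcases eq_or_ne x 0 with rfl | hx0
  · simp
  rw [← IsDiscreteValuationRing.addVal_le_iff_dvd]
  exact not_lt.mp (Function.not_lt_argminOn v s ⟨hx, hx0⟩)

lemma IsLocalizedModule.injective_of_forall_smul_eq_zero {S : Submonoid R} {MS : Type*}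
    [AddCommGroup MS] [Module R MS] (f : M →ₗ[R] MS) [IsLocalizedModule S f]
    (htf : ∀ r ∈ S, ∀ m : M, r • m = 0 → m = 0) : Function.Injective f := by
  refine (injective_iff_map_eq_zero f).mpr fun m hm => ?_
  obtain ⟨r, hr⟩ := (IsLocalizedModule.eq_zero_iff S f).mp hm
  exact htf r r.2 m hr

variable {K : Type*} [CommRing K] [Algebra R K] [IsFractionRing R K]

lemma exists_ideal_linearEquiv_of_injective [Module.Finite R M] {g : M →ₗ[R] K}
    (hg : Function.Injective g) : ∃ I : Ideal R, Nonempty (M ≃ₗ[R] I) := by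
  let J : FractionalIdeal R⁰ K := ⟨LinearMap.range g,
    FractionalIdeal.isFractional_of_fg (Module.Finite.iff_fg.mp inferInstance)⟩
  exact ⟨J.num,
    ⟨(LinearEquiv.ofInjective g hg).trans (FractionalIdeal.equivNumOfIsLocalization J)⟩⟩

variable [IsDomain R]

lemma Ideal.nonempty_linearEquiv_span_pair {a w x y : R} (ha : a ≠ 0) (hx : x ≠ 0)
    (h : a * y = x * w) : Nonempty (Ideal.span {a, w} ≃ₗ[R] Ideal.span {x, y}) := by
  have hmap : Submodule.map (LinearMap.mulLeft R x) (Ideal.span {a, w}) =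
      Submodule.map (LinearMap.mulLeft R a) (Ideal.span {x, y}) := by
    simp only [Ideal.span, Submodule.map_span, Set.image_pair, LinearMap.mulLeft_apply, h,
      mul_comm x a]
  exact ⟨(Submodule.equivMapOfInjective _ (mul_right_injective₀ hx) _).trans <|
    (LinearEquiv.ofEq _ _ hmap).trans
      (Submodule.equivMapOfInjective _ (mul_right_injective₀ ha) _).symm⟩

lemma exists_injective_linearMap_fractionRing {MK : Type*} [AddCommGroup MK] [Module R MK]
    [Module K MK] [IsScalarTower R K MK] {f : M →ₗ[R] MK} (hf : Function.Injective f)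
    (hrk : Module.finrank K MK = 1) : ∃ g : M →ₗ[R] K, Function.Injective g := by
  let : Field K := IsFractionRing.toField R
  have : FiniteDimensional K MK := Module.finite_of_finrank_eq_succ hrk
  obtain ⟨e⟩ : Nonempty (MK ≃ₗ[K] K) :=
    FiniteDimensional.nonempty_linearEquiv_of_finrank_eq (by rw [hrk, Module.finrank_self])
  exact ⟨(e.restrictScalars R).toLinearMap ∘ₗ f, (e.restrictScalars R).injective.comp hf⟩

theorem exists_ideal_ne_bot_linearEquiv_of_finrank_eq_one [Module.Finite R M]
    (htf : ∀ r ∈ R⁰, ∀ m : M, r • m = 0 → m = 0) {MK : Type*} [AddCommGroup MK] [Module R MK]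
    [Module K MK] [IsScalarTower R K MK] (f : M →ₗ[R] MK) [IsLocalizedModule R⁰ f]
    (hrk : Module.finrank K MK = 1) : ∃ I : Ideal R, I ≠ ⊥ ∧ Nonempty (M ≃ₗ[R] I) := by
  obtain ⟨g, hg⟩ := exists_injective_linearMap_fractionRing
    (IsLocalizedModule.injective_of_forall_smul_eq_zero f htf) hrk
  obtain ⟨I, ⟨e⟩⟩ := exists_ideal_linearEquiv_of_injective hg
  refine ⟨I, ?_, ⟨e⟩⟩
  rintro rfl
  have : Subsingleton M := e.toEquiv.subsingleton
  have := IsLocalizedModule.subsingleton_of_subsingleton R⁰ f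
  have : Nontrivial K := IsFractionRing.nontrivial R K
  exact zero_ne_one (Module.finrank_zero_of_subsingleton.symm.trans hrk)

end General

namespace Cusp

variable {k : Type} [Field k]

variable (k) in
lemma hasSubst_param : MvPowerSeries.HasSubst ![(X : k⟦X⟧) ^ 2, X ^ 3] :=
  MvPowerSeries.hasSubst_of_constantCoeff_zero fun s => by
    fin_cases s <;> simp <;> exact PowerSeries.constantCoeff_X

variable (k) in
def param : MvPowerSeries (Fin 2) k →ₐ[k] k⟦X⟧ :=
  MvPowerSeries.substAlgHom (hasSubst_param k)

lemma param_X_zero : param k (MvPowerSeries.X 0) = X ^ 2 := by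
  simp [param, MvPowerSeries.subst_X (hasSubst_param k)]

lemma param_X_one : param k (MvPowerSeries.X 1) = X ^ 3 := by
  simp [param, MvPowerSeries.subst_X (hasSubst_param k)]

lemma coeff_param (F : MvPowerSeries (Fin 2) k) (n : ℕ) :
    coeff n (param k F) = ∑ᶠ d : Fin 2 →₀ ℕ,
      if n = 2 * d 0 + 3 * d 1 then MvPowerSeries.coeff d F else 0 := by
  rw [param, MvPowerSeries.substAlgHom_apply, PowerSeries.coeff,
    MvPowerSeries.coeff_subst (hasSubst_param k)]
  refine finsum_congr fun d => ?_
  rw [Finsupp.prod_fintype _ _ fun _ => pow_zero _, Fin.prod_univ_two]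
  simp [← pow_mul, ← pow_add]

lemma coeff_one_param (F : MvPowerSeries (Fin 2) k) : coeff 1 (param k F) = 0 := by
  rw [coeff_param]
  exact finsum_eq_zero_of_forall_eq_zero fun d => if_neg (by omega)

def monomialExp (a b : ℕ) : Fin 2 →₀ ℕ := Finsupp.single 0 a + Finsupp.single 1 b

@[simp] lemma monomialExp_zero (a b : ℕ) : monomialExp a b 0 = a := by simp [monomialExp]
@[simp] lemma monomialExp_one (a b : ℕ) : monomialExp a b 1 = b := by simp [monomialExp]

lemma monomialExp_apply_self (d : Fin 2 →₀ ℕ) : monomialExp (d 0) (d 1) = d := by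
  ext i; fin_cases i <;> simp

lemma monomialExp_injective {a b a' b' : ℕ} (h : monomialExp a b = monomialExp a' b') :
    a = a' ∧ b = b' :=
  ⟨by simpa using congr($h 0), by simpa using congr($h 1)⟩

/-- Modulo `y² - x³`, the monomials `x ^ (a - 3 i) * y ^ (b + 2 i)` are all congruent to
`x ^ a * y ^ b`. -/
def lineSum (F : MvPowerSeries (Fin 2) k) (a b : ℕ) : k :=
  ∑ i ∈ Finset.range (a / 3 + 1), MvPowerSeries.coeff (monomialExp (a - 3 * i) (b + 2 * i)) F

lemma lineSum_eq (F : MvPowerSeries (Fin 2) k) (a b : ℕ) :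
    lineSum F a b = MvPowerSeries.coeff (monomialExp a b) F +
      if 3 ≤ a then lineSum F (a - 3) (b + 2) else 0 := by
  rw [lineSum, Finset.sum_range_succ', add_comm]
  split_ifs with ha
  · rw [lineSum, show (a - 3) / 3 + 1 = a / 3 by omega]
    congr 1
    refine Finset.sum_congr rfl fun i _ => ?_
    rw [show a - 3 * (i + 1) = a - 3 - 3 * i by omega,
      show b + 2 * (i + 1) = b + 2 + 2 * i by omega]
  · rw [show a / 3 = 0 by omega]
    simp

lemma coeff_param_eq_lineSum (F : MvPowerSeries (Fin 2) k) {a b : ℕ} (hb : b < 2) :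
    coeff (2 * a + 3 * b) (param k F) = lineSum F a b := by
  classical
  set e : ℕ → Fin 2 →₀ ℕ := fun i => monomialExp (a - 3 * i) (b + 2 * i)
  have he : Set.InjOn e (Finset.range (a / 3 + 1)) := fun i _ j _ h => by
    have := (monomialExp_injective h).2
    omega
  rw [coeff_param, finsum_eq_sum_of_support_subset (s := (Finset.range (a / 3 + 1)).image e),
    Finset.sum_image he, lineSum]
  · refine Finset.sum_congr rfl fun i hi => if_pos ?_
    simp only [Finset.mem_range] at hi
    simp only [e, monomialExp_zero, monomialExp_one]
    omega
  · intro d hd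
    have hw : 2 * a + 3 * b = 2 * d 0 + 3 * d 1 := by
      by_contra h
      exact hd (if_neg h)
    simp only [Finset.coe_image, Finset.coe_range, Set.mem_image, Set.mem_Iio]
    refine ⟨(d 1 - b) / 2, by omega, ?_⟩
    refine Eq.trans ?_ (monomialExp_apply_self d)
    simp only [e]
    congr 1 <;> omega

def relQuot (F : MvPowerSeries (Fin 2) k) : MvPowerSeries (Fin 2) k :=
  fun d => lineSum F (d 0) (d 1 + 2)

def relRem (g : k⟦X⟧) : MvPowerSeries (Fin 2) k :=
  fun d => if d 1 < 2 then coeff (2 * d 0 + 3 * d 1) g else 0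

lemma coeff_X_pow_mul (Q : MvPowerSeries (Fin 2) k) (s : Fin 2) (n : ℕ) (d : Fin 2 →₀ ℕ) :
    MvPowerSeries.coeff d (MvPowerSeries.X s ^ n * Q) =
      if n ≤ d s then MvPowerSeries.coeff (d - Finsupp.single s n) Q else 0 := by
  rw [MvPowerSeries.X_pow_eq, MvPowerSeries.coeff_monomial_mul, one_mul]
  exact if_congr Finsupp.single_le_iff rfl rfl

lemma coeff_relQuot (F : MvPowerSeries (Fin 2) k) (d : Fin 2 →₀ ℕ) :
    MvPowerSeries.coeff d (relQuot F) = lineSum F (d 0) (d 1 + 2) := rfl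

lemma coeff_relRem (g : k⟦X⟧) (d : Fin 2 →₀ ℕ) :
    MvPowerSeries.coeff d (relRem g) = if d 1 < 2 then coeff (2 * d 0 + 3 * d 1) g else 0 := rfl

lemma eq_rel_mul_relQuot_add_relRem (F : MvPowerSeries (Fin 2) k) :
    F = (MvPowerSeries.X 1 ^ 2 - MvPowerSeries.X 0 ^ 3) * relQuot F + relRem (param k F) := by
  ext d
  have key := lineSum_eq F (d 0) (d 1)
  rw [monomialExp_apply_self] at key
  rw [map_add, sub_mul, map_sub, coeff_X_pow_mul, coeff_X_pow_mul, coeff_relQuot, coeff_relQuot,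
    coeff_relRem]
  simp only [Finsupp.tsub_apply, Finsupp.single_eq_same, tsub_zero,
    Finsupp.single_eq_of_ne (by decide : (1 : Fin 2) ≠ 0),
    Finsupp.single_eq_of_ne (by decide : (0 : Fin 2) ≠ 1)]
  by_cases hd : d 1 < 2
  · rw [if_neg (by omega), if_pos hd, coeff_param_eq_lineSum F hd, key]
    ring
  · rw [if_pos (by omega), if_neg hd, Nat.sub_add_cancel (by omega), key]
    ring

lemma param_relRem {g : k⟦X⟧} (hg : coeff 1 g = 0) : param k (relRem g) = g := by
  ext n
  by_cases hn : n = 1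
  · rw [hn, hg, coeff_one_param]
  obtain ⟨a, b, hb, rfl⟩ : ∃ a b, b < 2 ∧ n = 2 * a + 3 * b :=
    ⟨(n - 3 * (n % 2)) / 2, n % 2, Nat.mod_lt _ two_pos, by omega⟩
  have hzero : lineSum (relRem g) (a - 3) (b + 2) = 0 :=
    Finset.sum_eq_zero fun i _ => by
      rw [coeff_relRem, monomialExp_one, if_neg (by omega)]
  rw [coeff_param_eq_lineSum _ hb, lineSum_eq, hzero, ite_self, add_zero, coeff_relRem,
    monomialExp_zero, monomialExp_one, if_pos hb]

lemma param_eq_zero_iff (F : MvPowerSeries (Fin 2) k) :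
    param k F = 0 ↔ F ∈ Ideal.span {MvPowerSeries.X 1 ^ 2 - MvPowerSeries.X 0 ^ 3} := by
  rw [Ideal.mem_span_singleton']
  constructor
  · intro hF
    have hrem : relRem (0 : k⟦X⟧) = 0 := by
      ext d
      simp [coeff_relRem]
    refine ⟨relQuot F, ?_⟩
    rw [mul_comm]
    conv_rhs => rw [eq_rel_mul_relQuot_add_relRem F, hF, hrem, add_zero]
  · rintro ⟨Q, rfl⟩
    rw [map_mul, map_sub, map_pow, map_pow, param_X_zero, param_X_one]
    ring

variable (k) in
def cuspParam : CuspRing k →ₐ[k] k⟦X⟧ :=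
  Ideal.Quotient.liftₐ _ (param k) fun F hF => (param_eq_zero_iff F).mpr hF

lemma cuspParam_cuspX : cuspParam k (cuspX k) = X ^ 2 := param_X_zero

lemma cuspX_ne_zero : cuspX k ≠ 0 := fun h =>
  pow_ne_zero 2 (X_ne_zero : (X : k⟦X⟧) ≠ 0) (by rw [← cuspParam_cuspX, h, map_zero])

lemma cuspParam_cuspY : cuspParam k (cuspY k) = X ^ 3 := param_X_one

lemma cuspParam_algebraMap (c : k) : cuspParam k (algebraMap k (CuspRing k) c) = C c :=
  (cuspParam k).commutes c

lemma cuspParam_injective : Function.Injective (cuspParam k) := by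
  rw [injective_iff_map_eq_zero]
  rintro ⟨F⟩ hF
  exact Ideal.Quotient.eq_zero_iff_mem.mpr ((param_eq_zero_iff F).mp hF)

lemma exists_cuspParam_eq {g : k⟦X⟧} (hg : coeff 1 g = 0) : ∃ r, cuspParam k r = g :=
  ⟨Ideal.Quotient.mk _ (relRem g), param_relRem hg⟩

instance : IsDomain (CuspRing k) := cuspParam_injective.isDomain (cuspParam k).toRingHom

lemma exists_cuspParam_add_C_mul_X (u : k⟦X⟧) : ∃ r, cuspParam k r + C (coeff 1 u) * X = u := by
  obtain ⟨r, hr⟩ := exists_cuspParam_eq (g := u - C (coeff 1 u) * X) (by simp)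
  exact ⟨r, by rw [hr, sub_add_cancel]⟩

lemma comap_span_cuspParam_eq_span_pair {a w : CuspRing k}
    (hw : cuspParam k w = X * cuspParam k a) :
    (Ideal.span {cuspParam k a}).comap (cuspParam k) = Ideal.span {a, w} := by
  refine le_antisymm (fun r hr => ?_) ?_
  · obtain ⟨u, hu⟩ := Ideal.mem_span_singleton'.mp (Ideal.mem_comap.mp hr)
    obtain ⟨r₁, hr₁⟩ := exists_cuspParam_add_C_mul_X u
    have hr : r = r₁ * a + algebraMap k _ (coeff 1 u) * w := cuspParam_injective <| by
      rw [map_add, map_mul, map_mul, cuspParam_algebraMap, hw]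
      linear_combination -hu - cuspParam k a * hr₁
    exact Ideal.mem_span_pair.mpr ⟨_, _, hr.symm⟩
  · rw [Ideal.span_le, Set.insert_subset_iff, Set.singleton_subset_iff]
    exact ⟨Ideal.mem_span_singleton_self _,
      Ideal.mem_span_singleton'.mpr ⟨X, by rw [hw]⟩⟩

lemma exists_mem_cuspParam_eq_X_mul {I : Ideal (CuspRing k)} {a x : CuspRing k} {c : k⟦X⟧}
    (ha : a ∈ I) (hx : x ∈ I) (hc : cuspParam k x = cuspParam k a * c) (hc₁ : coeff 1 c ≠ 0) :
    ∃ w ∈ I, cuspParam k w = X * cuspParam k a := by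
  obtain ⟨r, hr⟩ := exists_cuspParam_add_C_mul_X c
  have hC : C (coeff 1 c)⁻¹ * C (coeff 1 c) = 1 := by
    rw [← map_mul, inv_mul_cancel₀ hc₁, map_one]
  refine ⟨algebraMap k _ (coeff 1 c)⁻¹ * (x - a * r),
    I.mul_mem_left _ (I.sub_mem hx (I.mul_mem_right _ ha)), ?_⟩
  rw [map_mul, map_sub, map_mul, cuspParam_algebraMap, hc]
  linear_combination -(C (coeff 1 c)⁻¹ * cuspParam k a) * hr + X * cuspParam k a * hC

lemma eq_span_singleton_or_eq_span_pair {I : Ideal (CuspRing k)} (hI : I ≠ ⊥) :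
    (∃ a ≠ 0, I = Ideal.span {a}) ∨
      ∃ a w, a ≠ 0 ∧ cuspParam k w = X * cuspParam k a ∧ I = Ideal.span {a, w} := by
  obtain ⟨a, haI, ha0, hdvd⟩ := I.exists_mem_ne_zero_forall_map_dvd (cuspParam k).toRingHom hI
  by_cases hprin : ∀ x ∈ I, a ∣ x
  · exact .inl ⟨a, ha0, le_antisymm (fun x hx => Ideal.mem_span_singleton.mpr (hprin x hx))
      ((Ideal.span_singleton_le_iff_mem I).mpr haI)⟩
  obtain ⟨x, hxI, hax⟩ := not_forall₂.mp hprin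
  obtain ⟨c, hc⟩ := hdvd x hxI
  have hc₁ : coeff 1 c ≠ 0 := by
    intro h
    obtain ⟨r, hr⟩ := exists_cuspParam_eq h
    exact hax ⟨r, cuspParam_injective (by simp only [map_mul, hr]; exact hc)⟩
  obtain ⟨w, hwI, hw⟩ := exists_mem_cuspParam_eq_X_mul haI hxI hc hc₁
  refine .inr ⟨a, w, ha0, hw, le_antisymm ?_ ?_⟩
  · rw [← comap_span_cuspParam_eq_span_pair hw]
    exact fun y hy => Ideal.mem_comap.mpr (Ideal.mem_span_singleton.mpr (hdvd y hy))
  · rw [Ideal.span_le, Set.insert_subset_iff, Set.singleton_subset_iff]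
    exact ⟨haI, hwI⟩

end Cusp

theorem stmt_2
    (k : Type) [Field k]
    (M : Type) [AddCommGroup M] [Module (CuspRing k) M] [Module.Finite (CuspRing k) M]
    -- `M` is torsion free:
    (htf : ∀ r ∈ nonZeroDivisors (CuspRing k), ∀ m : M, r • m = 0 → m = 0)
    -- `K` is the fraction field of `R` (a one-dimensional local domain) and `MK` the
    -- localization of `M` at the non-zerodivisors, i.e. `M ⊗_R Frac R`:
    (K : Type) [CommRing K] [Algebra (CuspRing k) K] [IsFractionRing (CuspRing k) K]
    (MK : Type) [AddCommGroup MK] [Module (CuspRing k) MK] [Module K MK]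
    [IsScalarTower (CuspRing k) K MK]
    (f : M →ₗ[CuspRing k] MK) [IsLocalizedModule (nonZeroDivisors (CuspRing k)) f]
    -- `M` has rank 1: `M ⊗_R Frac R` is one-dimensional over `Frac R`:
    (hrk : Module.finrank K MK = 1) :
    Nonempty (M ≃ₗ[CuspRing k] CuspRing k) ∨
      Nonempty (M ≃ₗ[CuspRing k] (Ideal.span {cuspX k, cuspY k} : Ideal (CuspRing k))) := by
  obtain ⟨I, hI, ⟨e⟩⟩ := exists_ideal_ne_bot_linearEquiv_of_finrank_eq_one htf f hrk
  rcases Cusp.eq_span_singleton_or_eq_span_pair hI with ⟨a, ha, rfl⟩ | ⟨a, w, ha, hw, rfl⟩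
  · exact .inl ⟨e.trans (LinearEquiv.toSpanNonzeroSingleton _ _ a ha).symm⟩
  · refine .inr ((Ideal.nonempty_linearEquiv_span_pair ha Cusp.cuspX_ne_zero ?_).map e.trans)
    apply Cusp.cuspParam_injective
    rw [map_mul, map_mul, Cusp.cuspParam_cuspX, Cusp.cuspParam_cuspY, hw]
    ring
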